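/- arXiv:2408.14835 — 3 statements merged into one kernel-verified Lean document; each statement's English description precedes it below -/
import Mathlib

section
/- For all real x with 0 < x < 1, Malmstén's representation holds: log Γ(x) = ∫₀^∞ [e^{-(x-1)t} - (x-1)(e^{-t} - 1) - 1] / (t·(e^t - 1)) dt. -/
/-!
By Bohr–Mollerup, `log Γ(x)` is the limit of
`x log n + log n! - ∑_{m ≤ n} log (x + m)`. Each logarithm is a Frullani integral
`log a = ∫₀^∞ (e^{-t} - e^{-at}) / t dt`, and summing the resulting geometric series in `e^{-t}`
turns the integrand into Malmstén's integrand minus `e^{-nt} R(x, t)`, where `0 ≤ R ≤ 1` for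
`0 ≤ x ≤ 1` (the upper bound is Bernoulli's inequality `e^{-xt} ≤ 1 + x (e^{-t} - 1)`).
The error term is therefore at most `∫₀^∞ e^{-nt} dt = 1/n`.
-/

open Real MeasureTheory Set Filter Topology

lemma abs_exp_sub_exp_le_of_nonpos {u v : ℝ} (hu : u ≤ 0) (hv : v ≤ 0) :
    |exp u - exp v| ≤ |u - v| := by
  wlog h : v ≤ u generalizing u v
  · rw [abs_sub_comm, abs_sub_comm u]; exact this hv hu (le_of_not_ge h)
  have hexp : exp u - exp v = exp u * (1 - exp (v - u)) := by
    rw [mul_sub, ← exp_add]; ring_nf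
  have h1 : 1 - exp (v - u) ≤ u - v := by linarith [add_one_le_exp (v - u)]
  have h2 : 0 ≤ 1 - exp (v - u) := by simp [exp_le_one_iff, h]
  rw [hexp, abs_of_nonneg (mul_nonneg (exp_pos u).le h2), abs_of_nonneg (by linarith)]
  calc exp u * (1 - exp (v - u)) ≤ 1 * (u - v) :=
        mul_le_mul (exp_le_one_iff.mpr hu) h1 h2 zero_le_one
    _ = u - v := one_mul _

lemma abs_exp_neg_sub_exp_neg_mul_le (a : ℝ) {t : ℝ} (ht : 0 ≤ t) :
    |exp (-t) - exp (-a * t)| ≤ |1 - a| * t * exp (-min 1 a * t) := by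
  set c := min 1 a
  have hsplit : ∀ b, exp (-b * t) = exp (-c * t) * exp (-((b - c) * t)) := fun b => by
    rw [← exp_add]; ring_nf
  have hlip := abs_exp_sub_exp_le_of_nonpos
    (neg_nonpos.mpr (mul_nonneg (sub_nonneg.mpr (min_le_left 1 a)) ht))
    (neg_nonpos.mpr (mul_nonneg (sub_nonneg.mpr (min_le_right 1 a)) ht))
  calc |exp (-t) - exp (-a * t)|
      = exp (-c * t) * |exp (-((1 - c) * t)) - exp (-((a - c) * t))| := by
        rw [show exp (-t) = exp (-1 * t) by ring_nf, hsplit 1, hsplit a, ← mul_sub, abs_mul,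
          abs_of_pos (exp_pos _)]
    _ ≤ exp (-c * t) * (|1 - a| * t) := by
        refine mul_le_mul_of_nonneg_left (hlip.trans_eq ?_) (exp_pos _).le
        rw [show -((1 - c) * t) - -((a - c) * t) = (a - 1) * t by ring, abs_mul, abs_sub_comm,
          abs_of_nonneg ht]
    _ = |1 - a| * t * exp (-c * t) := by ring

noncomputable def frullaniKernel (a t : ℝ) : ℝ := (exp (-t) - exp (-a * t)) / t

lemma integrableOn_frullaniKernel {a : ℝ} (ha : 0 < a) :
    IntegrableOn (frullaniKernel a) (Ioi 0) := by
  refine Integrable.mono' ((exp_neg_integrableOn_Ioi 0 (lt_min one_pos ha)).const_mul |1 - a|)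
    (by unfold frullaniKernel; fun_prop : Measurable _).aestronglyMeasurable ?_
  filter_upwards [self_mem_ae_restrict measurableSet_Ioi] with t (ht : 0 < t)
  rw [frullaniKernel, norm_div, norm_of_nonneg ht.le, div_le_iff₀ ht, norm_eq_abs]
  exact (abs_exp_neg_sub_exp_neg_mul_le a ht.le).trans_eq (by ring)

lemma integral_frullaniKernel {a : ℝ} (ha : 0 < a) :
    ∫ t in Ioi 0, frullaniKernel a t = log a := by
  have h := Frullani.integral_Ioi_eq (f := fun u => exp (-u)) (L := 1) (R := 0)
    (continuous_neg.rexp.locallyIntegrable.locallyIntegrableOn _) one_pos ha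
    (by simpa using (continuous_neg.rexp.tendsto 0).mono_left nhdsWithin_le_nhds)
    tendsto_exp_neg_atTop_nhds_zero ?_
  · simpa [frullaniKernel, div_eq_inv_mul] using h
  · refine (integrableOn_frullaniKernel ha).congr_fun (fun t _ => ?_) measurableSet_Ioi
    simp [frullaniKernel, div_eq_inv_mul]

lemma integral_exp_neg_mul_Ioi_zero {b : ℝ} (hb : 0 < b) : ∫ t in Ioi 0, exp (-b * t) = b⁻¹ := by
  rw [integral_exp_mul_Ioi (neg_lt_zero.mpr hb)]
  simp

lemma one_sub_exp_neg_pos {t : ℝ} (ht : 0 < t) : 0 < 1 - exp (-t) :=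
  sub_pos.mpr (exp_lt_one_iff.mpr (neg_lt_zero.mpr ht))

lemma exp_neg_mul_self_le_one_sub_exp_neg (t : ℝ) : exp (-t) * t ≤ 1 - exp (-t) := by
  have h := mul_le_mul_of_nonneg_left (add_one_le_exp t) (exp_pos (-t)).le
  rw [← exp_add, neg_add_cancel, exp_zero] at h
  linarith

noncomputable def malmstenRemainder (x t : ℝ) : ℝ :=
  (x - exp (-t) * (1 - exp (-x * t)) / (1 - exp (-t))) / t

section

variable {x t : ℝ}

lemma malmstenRemainder_nonneg (hx : 0 ≤ x) (ht : 0 < t) : 0 ≤ malmstenRemainder x t := by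
  have hr := one_sub_exp_neg_pos ht
  have hs : 1 - exp (-x * t) ≤ x * t := by linarith [add_one_le_exp (-x * t)]
  refine div_nonneg (sub_nonneg.mpr ((div_le_iff₀ hr).mpr ?_)) ht.le
  calc exp (-t) * (1 - exp (-x * t)) ≤ exp (-t) * (x * t) :=
        mul_le_mul_of_nonneg_left hs (exp_pos _).le
    _ = x * (exp (-t) * t) := by ring
    _ ≤ x * (1 - exp (-t)) := mul_le_mul_of_nonneg_left (exp_neg_mul_self_le_one_sub_exp_neg t) hx

lemma malmstenRemainder_le_one (hx0 : 0 ≤ x) (hx1 : x ≤ 1) (ht : 0 < t) :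
    malmstenRemainder x t ≤ 1 := by
  have hr := one_sub_exp_neg_pos ht
  have hbernoulli : exp (-x * t) ≤ 1 + x * (exp (-t) - 1) := by
    have h := rpow_one_add_le_one_add_mul_self (s := exp (-t) - 1)
      (by linarith [exp_pos (-t)]) hx0 hx1
    rwa [add_sub_cancel, ← exp_mul, neg_mul_comm, mul_comm] at h
  have hlow : exp (-t) * x ≤ exp (-t) * (1 - exp (-x * t)) / (1 - exp (-t)) := by
    rw [le_div_iff₀ hr]
    nlinarith [exp_pos (-t)]
  have ht' : 1 - exp (-t) ≤ t := by linarith [add_one_le_exp (-t)]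
  rw [malmstenRemainder, div_le_one ht]
  nlinarith

noncomputable def malmstenIntegrand (x t : ℝ) : ℝ :=
  (exp (-(x - 1) * t) - (x - 1) * (exp (-t) - 1) - 1) / (t * (exp t - 1))

noncomputable def logGammaSeqKernel (x : ℝ) (n : ℕ) (t : ℝ) : ℝ :=
  x * frullaniKernel n t + ∑ m ∈ Finset.range n, frullaniKernel (m + 1) t
    - ∑ m ∈ Finset.range (n + 1), frullaniKernel (x + m) t

lemma logGammaSeqKernel_eq (n : ℕ) (ht : 0 < t) :
    logGammaSeqKernel x n t = malmstenIntegrand x t - exp (-n * t) * malmstenRemainder x t := by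
  have ht0 : t ≠ 0 := ht.ne'
  have hr := (one_sub_exp_neg_pos ht).ne'
  induction n with
  | zero =>
    have hexp : exp (-(x - 1) * t) = exp (-x * t) * (exp (-t))⁻¹ := by
      rw [← exp_neg, ← exp_add]; ring_nf
    have het : exp t = (exp (-t))⁻¹ := by rw [exp_neg, inv_inv]
    have he : (exp (-t))⁻¹ - 1 ≠ 0 := by
      rw [← het, sub_ne_zero, Ne, exp_eq_one_iff]; exact ht0
    simp only [logGammaSeqKernel, malmstenIntegrand, malmstenRemainder, frullaniKernel, zero_add,
      Finset.sum_range_one, Finset.range_zero, Finset.sum_empty, Nat.cast_zero, neg_zero, zero_mul,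
      exp_zero, add_zero, hexp, het]
    field_simp
    ring
  | succ n ih =>
    have hstep : logGammaSeqKernel x (n + 1) t = logGammaSeqKernel x n t
        + x * (frullaniKernel (n + 1) t - frullaniKernel n t) + frullaniKernel (n + 1) t
        - frullaniKernel (x + (n + 1)) t := by
      simp only [logGammaSeqKernel, Finset.sum_range_succ (n := n + 1),
        Finset.sum_range_succ (n := n)]
      push_cast; ring
    have e1 : exp (-(n + 1) * t) = exp (-n * t) * exp (-t) := by rw [← exp_add]; ring_nf
    have e2 : exp (-(x + (n + 1)) * t) = exp (-x * t) * exp (-n * t) * exp (-t) := by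
      rw [← exp_add, ← exp_add]; ring_nf
    rw [hstep, ih]
    push_cast
    simp only [frullaniKernel, malmstenRemainder, e1, e2]
    field_simp
    ring

lemma integrableOn_exp_mul_malmstenRemainder (hx0 : 0 ≤ x) (hx1 : x ≤ 1) {b : ℝ} (hb : 0 < b) :
    IntegrableOn (fun t => exp (-b * t) * malmstenRemainder x t) (Ioi 0) := by
  refine Integrable.mono' (exp_neg_integrableOn_Ioi 0 hb)
    (by unfold malmstenRemainder; fun_prop : Measurable _).aestronglyMeasurable ?_
  filter_upwards [self_mem_ae_restrict measurableSet_Ioi] with t (ht : 0 < t)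
  rw [norm_mul, norm_of_nonneg (exp_pos _).le, norm_of_nonneg (malmstenRemainder_nonneg hx0 ht)]
  exact mul_le_of_le_one_right (exp_pos _).le (malmstenRemainder_le_one hx0 hx1 ht)

lemma tendsto_integral_exp_mul_malmstenRemainder (hx0 : 0 ≤ x) (hx1 : x ≤ 1) :
    Tendsto (fun n : ℕ => ∫ t in Ioi 0, exp (-n * t) * malmstenRemainder x t) atTop (𝓝 0) := by
  refine squeeze_zero' (.of_forall fun n => setIntegral_nonneg measurableSet_Ioi fun t ht =>
    mul_nonneg (exp_pos _).le (malmstenRemainder_nonneg hx0 ht)) ?_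
    (tendsto_inv_atTop_nhds_zero_nat (𝕜 := ℝ))
  filter_upwards [eventually_gt_atTop 0] with n hn
  have hn' : (0 : ℝ) < n := Nat.cast_pos.mpr hn
  calc ∫ t in Ioi 0, exp (-n * t) * malmstenRemainder x t ≤ ∫ t in Ioi 0, exp (-n * t) :=
        setIntegral_mono_on (integrableOn_exp_mul_malmstenRemainder hx0 hx1 hn')
          (exp_neg_integrableOn_Ioi 0 hn') measurableSet_Ioi fun t ht =>
          mul_le_of_le_one_right (exp_pos _).le (malmstenRemainder_le_one hx0 hx1 ht)
    _ = (n : ℝ)⁻¹ := integral_exp_neg_mul_Ioi_zero hn'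

lemma integrableOn_malmstenIntegrand (hx0 : 0 < x) (hx1 : x ≤ 1) :
    IntegrableOn (malmstenIntegrand x) (Ioi 0) := by
  have hkernel : IntegrableOn (logGammaSeqKernel x 1) (Ioi 0) := by
    unfold logGammaSeqKernel
    refine ((integrableOn_frullaniKernel (by simp)).const_mul x |>.add ?_).sub ?_ <;>
      exact integrable_finsetSum _ fun m _ => integrableOn_frullaniKernel (by positivity)
  refine (hkernel.add (integrableOn_exp_mul_malmstenRemainder hx0.le hx1 one_pos)).congr_fun
    (fun t ht => ?_) measurableSet_Ioi
  simp [logGammaSeqKernel_eq 1 ht]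

lemma integral_logGammaSeqKernel (hx : 0 < x) {n : ℕ} (hn : n ≠ 0) :
    ∫ t in Ioi 0, logGammaSeqKernel x n t = BohrMollerup.logGammaSeq x n := by
  have hsum₁ := integrable_finsetSum (μ := volume.restrict (Ioi 0)) (Finset.range n)
    fun m _ => integrableOn_frullaniKernel (a := m + 1) (by positivity)
  have hsum₂ := integrable_finsetSum (μ := volume.restrict (Ioi 0)) (Finset.range (n + 1))
    fun m _ => integrableOn_frullaniKernel (a := x + m) (by positivity)
  have hn' : (0 : ℝ) < n := by positivity
  have hmul := (integrableOn_frullaniKernel hn').const_mul x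
  have hadd : IntegrableOn (fun t => x * frullaniKernel n t
      + ∑ m ∈ Finset.range n, frullaniKernel (m + 1) t) (Ioi 0) := hmul.add hsum₁
  unfold logGammaSeqKernel
  rw [integral_sub hadd hsum₂, integral_add hmul hsum₁, integral_const_mul,
    integral_finsetSum _ fun m _ => integrableOn_frullaniKernel (by positivity),
    integral_finsetSum _ fun m _ => integrableOn_frullaniKernel (by positivity),
    integral_frullaniKernel hn', BohrMollerup.logGammaSeq,
    ← Finset.prod_range_add_one_eq_factorial, Nat.cast_prod, log_prod fun m _ => by positivity]
  have hlog₁ (m : ℕ) : ∫ t in Ioi 0, frullaniKernel (m + 1) t = log ↑(m + 1) := by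
    rw [integral_frullaniKernel (by positivity), Nat.cast_succ]
  have hlog₂ (m : ℕ) : ∫ t in Ioi 0, frullaniKernel (x + m) t = log (x + m) :=
    integral_frullaniKernel (by positivity)
  simp only [hlog₁, hlog₂]

end

theorem malmsten (x : ℝ) (hx0 : 0 < x) (hx1 : x < 1) :
    Real.log (Real.Gamma x)
      = ∫ t in Set.Ioi (0:ℝ),
          (Real.exp (-(x - 1) * t) - (x - 1) * (Real.exp (-t) - 1) - 1)
            / (t * (Real.exp t - 1)) := by
  have hseq : ∀ᶠ n : ℕ in atTop, (∫ t in Ioi 0, malmstenIntegrand x t)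
      - ∫ t in Ioi 0, exp (-n * t) * malmstenRemainder x t = BohrMollerup.logGammaSeq x n := by
    filter_upwards [eventually_gt_atTop 0] with n hn
    rw [← integral_logGammaSeqKernel hx0 hn.ne', ← integral_sub
      (integrableOn_malmstenIntegrand hx0 hx1.le)
      (integrableOn_exp_mul_malmstenRemainder hx0.le hx1.le (Nat.cast_pos.mpr hn))]
    exact setIntegral_congr_fun measurableSet_Ioi fun t ht => (logGammaSeqKernel_eq n ht).symm
  have hlim := (tendsto_const_nhds.sub
    (tendsto_integral_exp_mul_malmstenRemainder hx0.le hx1.le)).congr' hseq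
  rw [sub_zero] at hlim
  exact tendsto_nhds_unique (BohrMollerup.tendsto_log_gamma hx0) hlim
end

section
/- ∑_{n=1}^∞ [1-(-1)^n]·(log n)/n² = -(π²/12)·(3γ + 4 log 2 - 36 log A + 3 log π), where A is the Glaisher–Kinkelin constant satisfying ζ'(2) = (π²/6)(γ + log(2π) - 12 log A). -/
open Real

noncomputable def glaisher : ℝ := Real.exp (1/12 - (deriv riemannZeta (-1)).re)

namespace OddSumAux

open Complex Filter LSeries

local notation "γ" => Real.eulerMascheroniConstant

/-- The sum `∑ log(n+1)/(n+1)^2`. -/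
noncomputable def S : ℝ := ∑' n : ℕ, Real.log (n + 1) / ((n : ℝ) + 1)^2

lemma key_complex : deriv riemannZeta 2
    = 2 * (π:ℂ)^2 * deriv riemannZeta (-1)
      + (π:ℂ)^2 / 6 * ((γ:ℂ) - 1 + Complex.log (2 * (π:ℂ))) := by
  have hpi : (2 * (π:ℂ)) ≠ 0 := by simp [Complex.ext_iff, Real.pi_ne_zero]
  have hF : HasDerivAt (fun s : ℂ => 2 * (2 * (π:ℂ)) ^ (-s) * Complex.Gamma s
      * Complex.cos ((π:ℂ) * s / 2) * riemannZeta s)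
      (((2 * ((2 * (π:ℂ)) ^ (-(2:ℂ)) * Complex.log (2 * (π:ℂ)) * (-1)) * Complex.Gamma 2
          + 2 * (2 * (π:ℂ)) ^ (-(2:ℂ)) * (1 * (-(γ:ℂ) + 1))) * Complex.cos ((π:ℂ) * 2 / 2)
          + 2 * (2 * (π:ℂ)) ^ (-(2:ℂ)) * Complex.Gamma 2 * 0) * riemannZeta 2
        + 2 * (2 * (π:ℂ)) ^ (-(2:ℂ)) * Complex.Gamma 2 * Complex.cos ((π:ℂ) * 2 / 2)
          * deriv riemannZeta 2) 2 := by
    have ha : HasDerivAt (fun s : ℂ => 2 * (2 * (π:ℂ)) ^ (-s))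
        (2 * ((2 * (π:ℂ)) ^ (-(2:ℂ)) * Complex.log (2 * (π:ℂ)) * (-1))) 2 :=
      ((hasDerivAt_neg (2:ℂ)).const_cpow (Or.inl hpi)).const_mul 2
    have hG : HasDerivAt Complex.Gamma ((1:ℂ) * (-(γ:ℂ) + 1)) 2 := by
      have := Complex.hasDerivAt_Gamma_nat 1
      norm_num at this ⊢
      exact this
    have hcos : HasDerivAt (fun s : ℂ => Complex.cos ((π:ℂ) * s / 2)) 0 2 := by
      have hlin : HasDerivAt (fun s : ℂ => (π:ℂ) * s / 2) ((π:ℂ) * 1 / 2) 2 :=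
        ((hasDerivAt_id (2:ℂ)).const_mul (π:ℂ)).div_const 2
      refine hlin.ccos.congr_deriv ?_
      have : ((π:ℂ) * 2 / 2) = (π:ℂ) := by ring
      rw [this, Complex.sin_pi]
      ring
    have hz : HasDerivAt riemannZeta (deriv riemannZeta 2) 2 :=
      (differentiableAt_riemannZeta (by norm_num)).hasDerivAt
    exact ((ha.mul hG).mul hcos).mul hz
  have hL : HasDerivAt (fun s : ℂ => riemannZeta (1 - s)) (deriv riemannZeta (-1) * (-1)) 2 := by
    have hd : HasDerivAt riemannZeta (deriv riemannZeta (-1)) ((fun s : ℂ => 1 - s) 2) := by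
      have : ((fun s : ℂ => 1 - s) 2) = (-1 : ℂ) := by norm_num
      rw [this]
      exact (differentiableAt_riemannZeta (by norm_num)).hasDerivAt
    have hsub : HasDerivAt (fun s : ℂ => 1 - s) (-1) 2 := (hasDerivAt_id (2:ℂ)).const_sub 1
    exact hd.comp 2 hsub
  have heq : (fun s : ℂ => riemannZeta (1 - s)) =ᶠ[nhds (2:ℂ)]
      (fun s : ℂ => 2 * (2 * (π:ℂ)) ^ (-s) * Complex.Gamma s * Complex.cos ((π:ℂ) * s / 2)
        * riemannZeta s) := by
    have hopen : IsOpen {s : ℂ | 1 < s.re} := isOpen_lt continuous_const Complex.continuous_re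
    have hmem : (2:ℂ) ∈ {s : ℂ | 1 < s.re} := by norm_num
    filter_upwards [hopen.mem_nhds hmem] with s hs
    have hs1 : s ≠ 1 := by rintro rfl; simp at hs
    have hs2 : ∀ n : ℕ, s ≠ -n := by
      intro n h
      rw [h] at hs
      simp at hs
      linarith [hs, n.cast_nonneg (α := ℝ)]
    rw [riemannZeta_one_sub hs2 hs1]
  have hL' := hL.congr_of_eventuallyEq heq.symm
  have huniq := hF.unique hL'
  have hG2 : Complex.Gamma 2 = 1 := by
    simpa using Complex.Gamma_nat_eq_factorial 1
  have hcos2 : Complex.cos ((π:ℂ) * 2 / 2) = -1 := by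
    have : ((π:ℂ) * 2 / 2) = (π:ℂ) := by ring
    rw [this, Complex.cos_pi]
  have hpow : (2 * (π:ℂ)) ^ (-(2:ℂ)) = (4 * (π:ℂ)^2)⁻¹ := by
    rw [Complex.cpow_neg, show ((2:ℂ)) = ((2:ℕ):ℂ) by norm_num, Complex.cpow_natCast]
    congr 1
    ring
  rw [hG2, hcos2, hpow, riemannZeta_two] at huniq
  have h4 : (4*(π:ℂ)^2) ≠ 0 := by
    simp [Complex.ext_iff, Real.pi_ne_zero]
  have hinv : (4*(π:ℂ)^2) * (4*(π:ℂ)^2)⁻¹ = 1 := mul_inv_cancel₀ h4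
  linear_combination (-2*(π:ℂ)^2) * huniq
    + (-(deriv riemannZeta 2 - (π:ℂ)^2/6 * (Complex.log (2*(π:ℂ)) + (γ:ℂ) - 1))) * hinv

lemma habs : abscissaOfAbsConv 1 < (2:ℂ).re := by
  rw [LSeries.abscissaOfAbsConv_one]
  simp only [Complex.re_ofNat]
  exact_mod_cast one_lt_two

lemma term_eq (n : ℕ) :
    term (logMul 1) 2 n = ((Real.log n / (n:ℝ)^2 : ℝ) : ℂ) := by
  rcases eq_or_ne n 0 with rfl | hn
  · simp [term_zero]
  · rw [term_of_ne_zero hn]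
    have h2 : ((n:ℂ) ^ (2:ℂ)) = ((n:ℝ)^2 : ℝ) := by
      rw [show ((2:ℂ)) = ((2:ℕ):ℂ) by norm_num, Complex.cpow_natCast]
      push_cast
      ring
    rw [h2]
    simp only [logMul, Pi.one_apply, mul_one]
    rw [show ((n:ℂ)) = ((n:ℝ) : ℂ) by push_cast; rfl,
      ← Complex.ofReal_log (Nat.cast_nonneg n)]
    push_cast
    ring

lemma hsummable_g : Summable (fun n : ℕ => Real.log n / (n:ℝ)^2) := by
  have := LSeriesSummable_logMul_of_lt_re habs
  exact Complex.summable_ofReal.mp (this.congr fun n => term_eq n)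

lemma hsummable_S : Summable (fun n : ℕ => Real.log (n + 1) / ((n : ℝ) + 1)^2) := by
  have := (summable_nat_add_iff 1).mpr hsummable_g
  simpa using this

lemma deriv_zeta_two : deriv riemannZeta 2 = -(S : ℂ) := by
  have heq : riemannZeta =ᶠ[nhds (2:ℂ)] LSeries 1 := by
    have hopen : IsOpen {s : ℂ | 1 < s.re} := isOpen_lt continuous_const Complex.continuous_re
    have hmem : (2:ℂ) ∈ {s : ℂ | 1 < s.re} := by norm_num
    filter_upwards [hopen.mem_nhds hmem] with s hs
    exact (LSeries_one_eq_riemannZeta hs).symm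
  rw [heq.deriv_eq, LSeries_deriv habs]
  congr 1
  rw [LSeries]
  simp_rw [term_eq]
  rw [← Complex.ofReal_tsum, Complex.ofReal_inj, Summable.tsum_eq_zero_add hsummable_g, S]
  simp only [Nat.cast_zero, Real.log_zero, zero_div, ne_eq, OfNat.ofNat_ne_zero,
    not_false_eq_true, zero_pow, zero_add]
  refine tsum_congr fun n => ?_
  push_cast
  ring

/-- The value of `S` in terms of the Glaisher data. -/
lemma S_eq : S = -(π^2/6 * (γ - 1 + Real.log (2*π)))
    - 2*π^2 * (deriv riemannZeta (-1)).re := by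
  have hlog : Complex.log (2 * (π:ℂ)) = ((Real.log (2*π) : ℝ) : ℂ) := by
    rw [show (2 * (π:ℂ)) = ((2*π : ℝ) : ℂ) by push_cast; ring,
      Complex.ofReal_log (by positivity)]
  have h := key_complex
  rw [deriv_zeta_two, hlog] at h
  have h' : ((-(S) - π^2/6 * (γ - 1 + Real.log (2*π)) : ℝ) : ℂ)
      = ((2*π^2 : ℝ) : ℂ) * deriv riemannZeta (-1) := by
    push_cast
    linear_combination h
  have := congrArg Complex.re h'
  rw [Complex.ofReal_re, Complex.re_ofReal_mul] at this
  linarith [this]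

end OddSumAux

open OddSumAux

theorem odd_sum_log_div_sq :
    ∑' n : ℕ, (1 - (-1:ℝ)^(n + 1)) * Real.log (n + 1) / ((n : ℝ) + 1)^2
      = -(π^2 / 12) * (3 * Real.eulerMascheroniConstant + 4 * Real.log 2
          - 36 * Real.log glaisher + 3 * Real.log π) := by
  classical
  set g : ℕ → ℝ := fun n => Real.log (n + 1) / ((n : ℝ) + 1)^2 with hg
  have hSg : Summable g := hsummable_S
  have hinj2 : Function.Injective (fun k : ℕ => 2 * k) := fun a b h => by
    dsimp only at h; omega
  have hinj2' : Function.Injective (fun k : ℕ => 2 * k + 1) := fun a b h => by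
    dsimp only at h; omega
  have he : Summable (fun k => g (2 * k)) := hSg.comp_injective hinj2
  have ho : Summable (fun k => g (2 * k + 1)) := hSg.comp_injective hinj2'
  -- the Basel sum
  have hbasel : HasSum (fun n : ℕ => 1 / ((n:ℝ) + 1)^2) (π^2/6) := by
    have h0 := hasSum_zeta_two
    have := (hasSum_nat_add_iff (f := fun n : ℕ => (1:ℝ) / (n:ℝ)^2) 1).mpr (by simpa using h0)
    simpa using this
  -- odd-index sum of g equals (log 2 / 4) * π²/6 + S/4
  have hoval : HasSum (fun k => g (2 * k + 1)) ((Real.log 2 / 4) * (π^2/6) + (1/4) * S) := by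
    have h1 : HasSum (fun n : ℕ => (Real.log 2 / 4) * (1 / ((n:ℝ) + 1)^2)
        + (1/4) * g n) ((Real.log 2 / 4) * (π^2/6) + (1/4) * S) :=
      (hbasel.mul_left _).add (hSg.hasSum.mul_left _)
    refine h1.congr_fun fun n => ?_
    have hpos : (0:ℝ) < (n:ℝ) + 1 := by positivity
    have : g (2 * n + 1) = Real.log (2 * ((n:ℝ) + 1)) / (2 * ((n:ℝ) + 1))^2 := by
      simp only [hg]
      push_cast
      ring_nf
    rw [this, Real.log_mul two_ne_zero hpos.ne', mul_pow]
    simp only [hg]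
    rw [div_mul_div_comm, div_mul_div_comm, mul_one, one_mul, ← add_div]
    norm_num
  have hosum : ∑' k, g (2 * k + 1) = (Real.log 2 / 4) * (π^2/6) + (1/4) * S := hoval.tsum_eq
  have hsplit : (∑' k, g (2 * k)) + ∑' k, g (2 * k + 1) = S :=
    tsum_even_add_odd he ho
  have hesum : ∑' k, g (2 * k) = (3/4) * S - (Real.log 2 / 4) * (π^2/6) := by
    rw [hosum] at hsplit
    linarith
  -- the original sum
  set f : ℕ → ℝ := fun n => (1 - (-1:ℝ)^(n + 1)) * Real.log (n + 1) / ((n : ℝ) + 1)^2 with hf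
  have hfe : ∀ k, f (2 * k) = 2 * g (2 * k) := by
    intro k
    simp only [hf, hg]
    rw [pow_succ, pow_mul]
    push_cast
    norm_num
    ring
  have hfo : ∀ k, f (2 * k + 1) = 0 := by
    intro k
    simp only [hf]
    rw [show 2 * k + 1 + 1 = 2 * (k + 1) by ring, pow_mul]
    norm_num
  have hfesum : Summable (fun k => f (2 * k)) := by
    refine (he.mul_left 2).congr fun k => (hfe k).symm
  have hfosum : Summable (fun k => f (2 * k + 1)) := by
    refine summable_zero.congr fun k => (hfo k).symm
  have hfsplit : (∑' k, f (2 * k)) + ∑' k, f (2 * k + 1) = ∑' n, f n :=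
    tsum_even_add_odd hfesum hfosum
  have h1 : ∑' k, f (2 * k) = 2 * ∑' k, g (2 * k) := by
    rw [← tsum_mul_left]
    exact tsum_congr hfe
  have h2 : ∑' k, f (2 * k + 1) = 0 := by
    simp [hfo]
  have hmain : ∑' n, f n = (3/2) * S - (π^2/12) * Real.log 2 := by
    rw [← hfsplit, h1, h2, hesum]
    ring
  have hSval := S_eq
  have hlogA : Real.log glaisher = 1/12 - (deriv riemannZeta (-1)).re := by
    rw [glaisher, Real.log_exp]
  rw [show (∑' n : ℕ, (1 - (-1:ℝ)^(n + 1)) * Real.log (n + 1) / ((n : ℝ) + 1)^2) = ∑' n, f n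
    from rfl, hmain, hSval, hlogA,
    Real.log_mul two_ne_zero Real.pi_ne_zero]
  ring
end

section
/- The Glaisher–Kinkelin limit exists: lim_{n→∞} H(n)·e^{n²/4} / n^{n²/2 + n/2 + 1/12} exists and is a positive real number, where H(n) = ∏_{k=1}^n k^k is the hyperfactorial. -/
/-!
Taking logarithms, the sequence is `exp` of `a n = ∑_{k ≤ n} k log k + n²/4 - c n log n` with
`c n = n²/2 + n/2 + 1/12`. The increment `a (n+1) - a n = (2n+1)/4 - c n · log (1 + 1/n)` is
`O(1/n²)`: the constant `1/12` is exactly what makes the `1/n` term of the cubic Taylor expansion of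
`c n · log (1 + 1/n)` cancel. So `a` converges, and the limit of the original sequence is `exp` of
its limit.
-/

open Real Filter Topology

theorem exists_tendsto_of_summable_sub {E : Type*} [AddCommGroup E] [TopologicalSpace E]
    [IsTopologicalAddGroup E] {f : ℕ → E} (h : Summable fun n ↦ f (n + 1) - f n) :
    ∃ L, Tendsto f atTop (𝓝 L) := by
  obtain ⟨s, hs⟩ := h
  refine ⟨f 0 + s, ?_⟩
  refine (tendsto_const_nhds.add hs.tendsto_sum_nat).congr fun n ↦ ?_
  rw [Finset.sum_range_sub, add_sub_cancel]

theorem abs_log_one_add_sub_cubic_le {x : ℝ} (hx : |x| ≤ 1 / 2) :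
    |log (1 + x) - (x - x ^ 2 / 2 + x ^ 3 / 3)| ≤ 2 * x ^ 4 := by
  have h := abs_log_sub_add_sum_range_le (x := -x) (by rw [abs_neg]; linarith) 3
  have hsum : ∑ i ∈ Finset.range 3, (-x) ^ (i + 1) / ((i : ℝ) + 1)
      = -(x - x ^ 2 / 2 + x ^ 3 / 3) := by
    simp only [Finset.sum_range_succ, Finset.sum_range_zero]
    push_cast
    ring
  rw [hsum, abs_neg, sub_neg_eq_add, neg_add_eq_sub] at h
  refine h.trans ?_
  rw [div_le_iff₀ (by linarith), (by decide : Even (3 + 1)).pow_abs]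
  show x ^ 4 ≤ _
  nlinarith [mul_nonneg (by positivity : (0 : ℝ) ≤ x ^ 4) (by linarith : 0 ≤ 1 / 2 - |x|)]

noncomputable def glaisherLog (n : ℕ) : ℝ :=
  (∑ k ∈ Finset.Icc 1 n, (k : ℝ) * log k) + (n : ℝ) ^ 2 / 4
    - ((n : ℝ) ^ 2 / 2 + (n : ℝ) / 2 + 1 / 12) * log n

theorem glaisherLog_succ_sub {n : ℕ} (hn : n ≠ 0) :
    glaisherLog (n + 1) - glaisherLog n
      = (2 * n + 1) / 4 - ((n : ℝ) ^ 2 / 2 + n / 2 + 1 / 12) * log (1 + 1 / n) := by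
  have hn' : (n : ℝ) ≠ 0 := by exact_mod_cast hn
  have hlog : log (1 + 1 / n) = log ((n : ℝ) + 1) - log n := by
    rw [← log_div (by positivity) hn', add_div, div_self hn']
  rw [glaisherLog, glaisherLog, Finset.sum_Icc_succ_top (by omega), hlog]
  push_cast
  ring

theorem abs_glaisherLog_succ_sub_le {n : ℕ} (hn : 2 ≤ n) :
    |glaisherLog (n + 1) - glaisherLog n| ≤ 3 / (n : ℝ) ^ 2 := by
  have hn2 : (2 : ℝ) ≤ n := by exact_mod_cast hn
  have hn0 : (0 : ℝ) < n := by linarith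
  set c : ℝ := (n : ℝ) ^ 2 / 2 + n / 2 + 1 / 12
  set x : ℝ := 1 / n
  have hx : |x| ≤ 1 / 2 := by
    rw [abs_of_pos (by positivity)]
    exact one_div_le_one_div_of_le two_pos hn2
  -- `c · (x - x²/2 + x³/3) = (2n+1)/4 + (9n+2)/(72n³)`
  have hcubic : (2 * n + 1) / 4 - c * log (1 + x)
      = -((9 * n + 2) / (72 * n ^ 3)) - c * (log (1 + x) - (x - x ^ 2 / 2 + x ^ 3 / 3)) := by
    simp only [c, x]
    field_simp
    ring
  rw [glaisherLog_succ_sub (by omega), hcubic]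
  calc |-((9 * n + 2) / (72 * n ^ 3)) - c * (log (1 + x) - (x - x ^ 2 / 2 + x ^ 3 / 3))|
      ≤ (9 * n + 2) / (72 * n ^ 3) + c * (2 * x ^ 4) := by
        refine (abs_sub _ _).trans (add_le_add ?_ ?_)
        · rw [abs_neg, abs_of_pos (by positivity)]
        · rw [abs_mul, abs_of_pos (by positivity)]
          exact mul_le_mul_of_nonneg_left (abs_log_one_add_sub_cubic_le hx) (by positivity)
    _ ≤ 3 / (n : ℝ) ^ 2 := by
        simp only [c, x]
        field_simp
        nlinarith

theorem summable_glaisherLog_succ_sub :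
    Summable fun n ↦ glaisherLog (n + 1) - glaisherLog n := by
  refine .of_norm_bounded_eventually_nat ((summable_nat_pow_inv.2 one_lt_two).mul_left 3) ?_
  filter_upwards [eventually_ge_atTop 2] with n hn
  simpa [div_eq_mul_inv] using abs_glaisherLog_succ_sub_le hn

theorem exp_glaisherLog {n : ℕ} (hn : n ≠ 0) :
    exp (glaisherLog n)
      = (∏ k ∈ Finset.Icc 1 n, (k : ℝ) ^ k) * exp ((n : ℝ) ^ 2 / 4)
          / (n : ℝ) ^ ((n : ℝ) ^ 2 / 2 + (n : ℝ) / 2 + 1 / 12) := by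
  have hprod :
      exp (∑ k ∈ Finset.Icc 1 n, (k : ℝ) * log k) = ∏ k ∈ Finset.Icc 1 n, (k : ℝ) ^ k := by
    rw [exp_sum]
    refine Finset.prod_congr rfl fun k hk ↦ ?_
    rw [exp_nat_mul, exp_log (by exact_mod_cast (Finset.mem_Icc.1 hk).1)]
  rw [glaisherLog, exp_sub, exp_add, hprod, rpow_def_of_pos (by positivity), mul_comm (log _)]

theorem glaisher_limit_exists :
    ∃ A : ℝ, 0 < A ∧
      Tendsto (fun n : ℕ =>
          (∏ k ∈ Finset.Icc 1 n, (k : ℝ)^k) * Real.exp ((n:ℝ)^2 / 4)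
            / (n : ℝ) ^ ((n:ℝ)^2 / 2 + (n:ℝ) / 2 + 1/12))
        atTop (nhds A) := by
  obtain ⟨L, hL⟩ := exists_tendsto_of_summable_sub summable_glaisherLog_succ_sub
  refine ⟨exp L, exp_pos L, (continuous_exp.tendsto L |>.comp hL).congr' ?_⟩
  filter_upwards [eventually_ne_atTop 0] with n hn
  exact exp_glaisherLog hn
end
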